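/- Let n ≥ 3 and let π ∈ S_n be a permutation avoiding both the pattern 213 and the pattern 312. If for some index i with 2 ≤ i ≤ n−1 the triple π²(i−1), π²(i), π²(i+1) is an occurrence of the consecutive pattern 213 in π² (i.e., π²(i) < π²(i−1) < π²(i+1)), then π(i) = n. -/
import Mathlib


/-- `π` contains the (classical) pattern `σ`: there is a strictly increasing
sequence of positions on which `π` is order isomorphic to `σ`. -/
def ContainsPat {n k : ℕ} (π : Equiv.Perm (Fin n)) (σ : Equiv.Perm (Fin k)) : Prop :=
  ∃ f : Fin k → Fin n, StrictMono f ∧ ∀ a b : Fin k, σ a < σ b ↔ π (f a) < π (f b)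

/-- `π` avoids the pattern `σ`. -/
def AvoidsPat {n k : ℕ} (π : Equiv.Perm (Fin n)) (σ : Equiv.Perm (Fin k)) : Prop :=
  ¬ ContainsPat π σ

/-- `π` contains the consecutive pattern `σ`: some `k` consecutive positions of `π`
carry values order isomorphic to `σ`. -/
def ContainsConsecPat {n k : ℕ} (π : Equiv.Perm (Fin n)) (σ : Equiv.Perm (Fin k)) : Prop :=
  ∃ (i : ℕ) (h : i + k ≤ n), ∀ a b : Fin k,
    σ a < σ b ↔ π ⟨i + a.val, by have := a.isLt; omega⟩ < π ⟨i + b.val, by have := b.isLt; omega⟩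

/-- `π` avoids the consecutive pattern `σ`. -/
def AvoidsConsecPat {n k : ℕ} (π : Equiv.Perm (Fin n)) (σ : Equiv.Perm (Fin k)) : Prop :=
  ¬ ContainsConsecPat π σ

/-- the pattern 231 (0-indexed: 0 ↦ 1, 1 ↦ 2, 2 ↦ 0) -/
def p231 : Equiv.Perm (Fin 3) := c[0, 1, 2]

/-- the pattern 312 (0-indexed: 0 ↦ 2, 1 ↦ 0, 2 ↦ 1) -/
def p312 : Equiv.Perm (Fin 3) := c[0, 2, 1]

/-- the pattern 213 (0-indexed: 0 ↦ 1, 1 ↦ 0, 2 ↦ 2) -/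
def p213 : Equiv.Perm (Fin 3) := c[0, 1]

/-- the pattern 1432 (0-indexed: 0 ↦ 0, 1 ↦ 3, 2 ↦ 2, 3 ↦ 1) -/
def p1432 : Equiv.Perm (Fin 4) := c[1, 3]

/-- direct sum of two permutations -/
def dsum {k m : ℕ} (σ : Equiv.Perm (Fin k)) (τ : Equiv.Perm (Fin m)) :
    Equiv.Perm (Fin (k + m)) :=
  finSumFinEquiv.symm.trans ((Equiv.sumCongr σ τ).trans finSumFinEquiv)

/-- the Lucas numbers: L₁ = 1, L₂ = 3, L_m = L_{m-1} + L_{m-2} -/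
def lucas : ℕ → ℕ
  | 0 => 2
  | 1 => 1
  | n + 2 => lucas (n + 1) + lucas n

lemma noValley {n : ℕ} (π : Equiv.Perm (Fin n))
    (h1 : AvoidsPat π p213) (h2 : AvoidsPat π p312)
    {p q r : Fin n} (hpq : p < q) (hqr : q < r)
    (hv1 : π q < π p) (hv2 : π q < π r) : False := by
  have hpr : p < r := lt_trans hpq hqr
  have hne : π p ≠ π r := fun h => absurd (π.injective h) (ne_of_lt hpr)
  have hsm : StrictMono (fun a : Fin 3 => if a.val = 0 then p else if a.val = 1 then q else r) := by
    intro a b hab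
    fin_cases a <;> fin_cases b <;>
      first
        | exact absurd hab (by decide)
        | exact hpq
        | exact hqr
        | exact hpr
  rcases lt_or_gt_of_ne hne with h | h
  · refine h1 ⟨_, hsm, ?_⟩
    intro a b
    fin_cases a <;> fin_cases b <;>
      first
        | exact iff_of_true (by decide) (by first | exact hv1 | exact hv2 | exact h)
        | exact iff_of_false (by decide)
            (by first | exact lt_asymm hv1 | exact lt_asymm hv2 | exact lt_asymm h
                      | exact lt_irrefl _)
  · refine h2 ⟨_, hsm, ?_⟩
    intro a b
    fin_cases a <;> fin_cases b <;>
      first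
        | exact iff_of_true (by decide) (by first | exact hv1 | exact hv2 | exact h)
        | exact iff_of_false (by decide)
            (by first | exact lt_asymm hv1 | exact lt_asymm hv2 | exact lt_asymm h
                      | exact lt_irrefl _)

lemma stmt10aux {n : ℕ} (π : Equiv.Perm (Fin n))
    (h1 : AvoidsPat π p213) (h2 : AvoidsPat π p312)
    (m P Q R : Fin n)
    (hmax : ∀ x : Fin n, x ≠ m → π x < π m)
    (hPQ : P < Q) (hQR : Q < R)
    (hPv : P.val + 1 = Q.val) (hRv : Q.val + 1 = R.val)
    (ha : π (π Q) < π (π P)) (hb : π (π P) < π (π R)) : Q = m := by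
  have incr : ∀ p q : Fin n, p < q → q ≤ m → π p < π q := by
    intro p q hpq hqm
    rcases eq_or_lt_of_le hqm with rfl | hqm'
    · exact hmax p (ne_of_lt hpq)
    · have hne : π p ≠ π q := fun h => absurd (π.injective h) (ne_of_lt hpq)
      rcases lt_or_gt_of_ne hne with h | h
      · exact h
      · exact absurd (noValley π h1 h2 hpq hqm' h (hmax q (ne_of_lt hqm'))) not_false
  have decr : ∀ p q : Fin n, m ≤ p → p < q → π q < π p := by
    intro p q hmp hpq
    rcases eq_or_lt_of_le hmp with rfl | hmp'
    · exact hmax q (ne_of_gt hpq)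
    · have hne : π p ≠ π q := fun h => absurd (π.injective h) (ne_of_lt hpq)
      rcases lt_or_gt_of_ne hne with h | h
      · exact absurd (noValley π h1 h2 hmp' hpq (hmax p (ne_of_gt hmp')) h) not_false
      · exact h
  by_contra hQm
  rcases lt_or_gt_of_ne hQm with hlt | hgt
  · -- Q < m : all three positions on the increasing side
    have hlt' : Q.val < m.val := Fin.lt_def.mp hlt
    have hRm : R ≤ m := Fin.le_def.mpr (by omega)
    have hab : π P < π Q := incr _ _ hPQ (le_of_lt hlt)
    have hbc : π Q < π R := incr _ _ hQR hRm
    have hmb : m < π Q := by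
      by_contra hc
      push_neg at hc
      exact absurd (incr _ _ hab hc) (lt_asymm ha)
    have := decr _ _ (le_of_lt hmb) hbc
    exact absurd (lt_trans ha hb) (lt_asymm this)
  · -- m < Q : all three positions on the decreasing side
    have hgt' : m.val < Q.val := Fin.lt_def.mp hgt
    have hmP : m ≤ P := Fin.le_def.mpr (by omega)
    have hba : π Q < π P := decr _ _ hmP hPQ
    have hcb : π R < π Q := decr _ _ (le_of_lt hgt) hQR
    have hma : m < π P := by
      by_contra hc
      push_neg at hc
      exact absurd (incr _ _ (lt_trans hcb hba) hc) (lt_asymm hb)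
    have hbm : π Q < m := by
      rcases lt_trichotomy (π Q) m with h | h | h
      · exact h
      · exact absurd (decr _ _ (le_of_eq h.symm) hba) (lt_asymm ha)
      · exact absurd (decr _ _ (le_of_lt h) hba) (lt_asymm ha)
    have := incr _ _ hcb (le_of_lt hbm)
    exact absurd (lt_trans ha hb) (lt_asymm this)


/-- for n ≥ 3 and π ∈ S_n avoiding 213 and 312, if the values of π² at
three consecutive positions i−1, i, i+1 (1-based 2 ≤ i ≤ n−1; here 0-indexed
1 ≤ i ≤ n−2) form an occurrence of the consecutive pattern 213, then π(i) = n. -/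
theorem stmt10 (n : ℕ) (hn : 3 ≤ n) (π : Equiv.Perm (Fin n))
    (h1 : AvoidsPat π p213) (h2 : AvoidsPat π p312)
    (i : ℕ) (hi1 : 1 ≤ i) (hi2 : i ≤ n - 2)
    (hocc1 : (π ^ 2) ⟨i, by omega⟩ < (π ^ 2) ⟨i - 1, by omega⟩)
    (hocc2 : (π ^ 2) ⟨i - 1, by omega⟩ < (π ^ 2) ⟨i + 1, by omega⟩) :
    π ⟨i, by omega⟩ = ⟨n - 1, by omega⟩ := by
  have hsq : ∀ x : Fin n, (π ^ 2) x = π (π x) := fun x => by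
    rw [pow_two, Equiv.Perm.mul_apply]
  simp only [hsq] at hocc1 hocc2
  have hπm : π (π.symm ⟨n - 1, by omega⟩) = ⟨n - 1, by omega⟩ := π.apply_symm_apply _
  have hmax : ∀ x : Fin n, x ≠ π.symm ⟨n - 1, by omega⟩ → π x < π (π.symm ⟨n - 1, by omega⟩) := by
    intro x hx
    have h3 : π x ≠ π (π.symm ⟨n - 1, by omega⟩) := fun h => hx (π.injective h)
    have h4 := (π x).isLt
    have h5 : (π x).val ≠ (π (π.symm ⟨n - 1, by omega⟩)).val := fun h => h3 (Fin.ext h)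
    have h6 : (π (π.symm ⟨n - 1, by omega⟩)).val = n - 1 := by rw [hπm]
    exact Fin.lt_def.mpr (by omega)
  have key : (⟨i, by omega⟩ : Fin n) = π.symm ⟨n - 1, by omega⟩ :=
    stmt10aux π h1 h2 _ ⟨i - 1, by omega⟩ ⟨i, by omega⟩ ⟨i + 1, by omega⟩ hmax
      (Fin.mk_lt_mk.mpr (by omega)) (Fin.mk_lt_mk.mpr (by omega))
      (by simp; omega) (by simp)
      hocc1 hocc2
  exact (congrArg π key).trans hπm
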